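/- Let Ω be a commutative semigroup and (A, (*_{α,β})_{α,β∈Ω}) an Ω-associative algebra. Then the commutator brackets [x,y]_{α,β} := x *_{α,β} y − y *_{β,α} x make A into an Ω-Lie algebra, i.e., [x,y]_{α,β} = −[y,x]_{β,α} and [[x,y]_{α,β}, z]_{αβ,γ} = [x,[y,z]_{β,γ}]_{α,βγ} − [y,[x,z]_{α,γ}]_{β,αγ} for all x,y,z∈A and α,β,γ∈Ω. -/
import Mathlib


/-- The commutator bracket `[x,y]_{α,β} = x *_{α,β} y − y *_{β,α} x`. -/
def omegaCommutator {k Ω A : Type*} [Field k] [Mul Ω] [AddCommGroup A] [Module k A]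
    (star : Ω → Ω → A →ₗ[k] A →ₗ[k] A) (α β : Ω) (x y : A) : A :=
  star α β x y - star β α y x

/-- An Ω-associative algebra gives an Ω-Lie algebra via the
commutator brackets. -/
theorem omegaAssoc_omega_Lie
    {k Ω A : Type*} [Field k] [CommSemigroup Ω] [AddCommGroup A] [Module k A]
    (star : Ω → Ω → A →ₗ[k] A →ₗ[k] A)
    (hassoc : ∀ (α β γ : Ω) (x y z : A),
      star (α * β) γ (star α β x y) z = star α (β * γ) x (star β γ y z)) :
    (∀ (α β : Ω) (x y : A),
      omegaCommutator star α β x y = -omegaCommutator star β α y x)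
    ∧ (∀ (α β γ : Ω) (x y z : A),
      omegaCommutator star (α * β) γ (omegaCommutator star α β x y) z
        = omegaCommutator star α (β * γ) x (omegaCommutator star β γ y z)
          - omegaCommutator star β (α * γ) y (omegaCommutator star α γ x z)) := by
  constructor
  · intro α β x y; simp [omegaCommutator]
  · intro α β γ x y z
    simp only [omegaCommutator, map_sub, LinearMap.sub_apply]
    have e1 : star α (β*γ) x (star β γ y z) = star (α*β) γ (star α β x y) z :=
      (hassoc α β γ x y z).symm
    have e2 : star α (β*γ) x (star γ β z y) = star (α*γ) β (star α γ x z) y := by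
      rw [mul_comm β γ]; exact (hassoc α γ β x z y).symm
    have e3 : star (β*γ) α (star β γ y z) x = star β (α*γ) y (star γ α z x) := by
      rw [hassoc β γ α y z x, mul_comm γ α]
    have e4 : star (β*γ) α (star γ β z y) x = star γ (α*β) z (star β α y x) := by
      rw [mul_comm β γ, hassoc γ β α z y x, mul_comm β α]
    have e5 : star β (α*γ) y (star α γ x z) = star (α*β) γ (star β α y x) z := by
      rw [← hassoc β α γ y x z, mul_comm β α]
    have e6 : star (α*γ) β (star γ α z x) y = star γ (α*β) z (star α β x y) := by
      rw [mul_comm α γ, hassoc γ α β z x y]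
    rw [e1, e2, e3, e4, e5, e6]
    abel
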